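/- arXiv:1807.10260 — 7 statements merged into one kernel-verified Lean document; each statement's English description precedes it below -/
import Mathlib

section
/- Let D be a positive integer with D ≡ 1 (mod 24) that is not a perfect square. Then the sum of σ₁((D − b²)/24) over all integers b with 0 < b < √D and b ≡ 1 or 11 (mod 12) equals the sum of σ₁((D − b²)/24) over all integers b with 0 < b < √D and b ≡ 5 or 7 (mod 12). (For all such b one has b² ≡ 1 (mod 24), so (D − b²)/24 is a positive integer.) -/
open Finset

/-- The divisor-sum function `σ₁ n = ∑_{0 < d ∣ n} d` (with `σ₁ 0 = 0`). -/
def sigma1 (n : ℕ) : ℕ := ∑ d ∈ n.divisors, d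

/-!
The logarithmic derivative of `P = ∏ (1 - Xⁿ)` is
`X P' = -P · ∑ₙ n Xⁿ / (1 - Xⁿ) = -P · ∑ₖ σ₁(k) Xᵏ`, so the coefficients `e m` of `P` satisfy
Euler's recurrence `∑_{m ≤ M} e m · σ₁(M - m) = -M · e M`. By the pentagonal number theorem,
`e m = χ₁₂(b)` when `24 m + 1 = b²`, and `e m = 0` when `24 m + 1` is not a square. For
`D = 24 M + 1` not a square the right-hand side vanishes, and the substitution `m = (b² - 1) / 24`
turns the left-hand side into the difference of the two sums.
-/

open PowerSeries

/-- The Kronecker symbol `(12 / b)` for `b` prime to `6`. -/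
def chi12 (b : ℕ) : ℤ := if b % 12 = 1 ∨ b % 12 = 11 then 1 else -1

theorem sq_mod_twenty_four_eq_one_iff {b : ℕ} :
    b ^ 2 % 24 = 1 ↔ b % 12 = 1 ∨ b % 12 = 5 ∨ b % 12 = 7 ∨ b % 12 = 11 := by
  have h24 := Nat.mod_lt b (show 24 > 0 by norm_num)
  have h12 : b % 12 = b % 24 % 12 := (Nat.mod_mod_of_dvd b (by norm_num)).symm
  rw [Nat.pow_mod, h12]
  interval_cases b % 24 <;> simp

theorem twenty_four_mul_pentagonal_add_one (k : ℤ) :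
    24 * pentagonal k + 1 = (6 * k - 1).natAbs ^ 2 := by
  zify
  rw [sq_abs]
  linear_combination 12 * two_mul_natCast_pentagonal k

theorem exists_natAbs_eq_and_negOnePow_eq {b : ℕ} (hb : b ^ 2 % 24 = 1) :
    ∃ k : ℤ, (6 * k - 1).natAbs = b ∧ (k.negOnePow : ℤ) = chi12 b := by
  obtain ⟨q, r, hr, rfl⟩ : ∃ q r, (r = 1 ∨ r = 5 ∨ r = 7 ∨ r = 11) ∧ b = 12 * q + r :=
    ⟨b / 12, b % 12, sq_mod_twenty_four_eq_one_iff.1 hb, (Nat.div_add_mod b 12).symm⟩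
  rcases hr with rfl | rfl | rfl | rfl
  · exact ⟨-(2 * q), by omega, by
      rw [Int.negOnePow_even _ ⟨-q, by ring⟩, chi12, if_pos (by omega)]; rfl⟩
  · exact ⟨2 * q + 1, by omega, by
      rw [Int.negOnePow_odd _ ⟨q, rfl⟩, chi12, if_neg (by omega)]; rfl⟩
  · exact ⟨-(2 * q + 1), by omega, by
      rw [Int.negOnePow_odd _ ⟨-q - 1, by ring⟩, chi12, if_neg (by omega)]; rfl⟩
  · exact ⟨2 * q + 2, by omega, by
      rw [Int.negOnePow_even _ ⟨q + 1, by ring⟩, chi12, if_pos (by omega)]; rfl⟩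

namespace PowerSeries

variable {R : Type*} [CommRing R]

noncomputable def multiplesSeries (n : ℕ) : R⟦X⟧ := mk fun k => if n ∣ k ∧ 0 < k then 1 else 0

theorem one_sub_X_pow_mul_multiplesSeries {n : ℕ} (hn : 0 < n) :
    (1 - X ^ n) * multiplesSeries n = (X ^ n : R⟦X⟧) := by
  ext k
  rw [sub_mul, one_mul, map_sub, coeff_X_pow_mul', multiplesSeries, coeff_mk, coeff_mk, coeff_X_pow]
  rcases lt_trichotomy k n with hk | rfl | hk
  · have : ¬ (n ∣ k ∧ 0 < k) := fun h => Nat.not_dvd_of_pos_of_lt h.2 hk h.1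
    rw [if_neg this, if_neg (by omega), if_neg (by omega), sub_zero]
  · simp [hn]
  · simp only [if_pos hk.le, if_neg hk.ne', Nat.dvd_sub_self_right, show ¬ k ≤ n by omega,
      or_false, show 0 < k by omega, show 0 < k - n by omega, and_true, sub_self]

noncomputable def divisorSumSeries (N : ℕ) : R⟦X⟧ :=
  ∑ n ∈ range N, ((n + 1 : ℕ) : R⟦X⟧) * multiplesSeries (n + 1)

theorem coeff_divisorSumSeries {N k : ℕ} (hk : k ≤ N) :
    coeff k (divisorSumSeries N : R⟦X⟧) = sigma1 k := by
  rcases Nat.eq_zero_or_pos k with rfl | hk0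
  · simp [divisorSumSeries, multiplesSeries, sigma1]
  have hterm : ∀ n, coeff k (((n + 1 : ℕ) : R⟦X⟧) * multiplesSeries (n + 1))
      = if n + 1 ∣ k then ((n + 1 : ℕ) : R) else 0 := by
    intro n
    rw [← map_natCast (C (R := R)), coeff_C_mul, multiplesSeries, coeff_mk]
    simp [hk0]
  rw [divisorSumSeries, map_sum, sum_congr rfl fun n _ => hterm n, ← sum_filter, sigma1,
    Nat.cast_sum]
  have hdiv : k.divisors = ((range N).filter (fun n => n + 1 ∣ k)).image (· + 1) := by
    ext d
    simp only [Nat.mem_divisors, mem_image, mem_filter, mem_range]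
    constructor
    · rintro ⟨hd, -⟩
      have := Nat.le_of_dvd hk0 hd
      have := Nat.pos_of_dvd_of_pos hd hk0
      exact ⟨d - 1, ⟨by omega, by rwa [Nat.sub_add_cancel (by omega)]⟩, by omega⟩
    · rintro ⟨n, ⟨-, hn⟩, rfl⟩
      exact ⟨hn, hk0.ne'⟩
  rw [hdiv, sum_image fun _ _ _ _ h => Nat.succ_injective h]

theorem X_mul_derivative_X_pow (n : ℕ) : X * d⁄dX R (X ^ n : R⟦X⟧) = (n : R⟦X⟧) * X ^ n := by
  rw [Derivation.leibniz_pow, derivative_X, smul_eq_mul, mul_one, nsmul_eq_mul]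
  rcases n with _ | n
  · simp
  · rw [Nat.add_sub_cancel, pow_succ]; ring

theorem X_mul_derivative_prod_one_sub_X_pow (N : ℕ) :
    X * d⁄dX R (∏ n ∈ range N, (1 - X ^ (n + 1))) =
      -((∏ n ∈ range N, (1 - X ^ (n + 1))) * divisorSumSeries N) := by
  induction N with
  | zero => simp [divisorSumSeries]
  | succ N ih =>
    have hG := one_sub_X_pow_mul_multiplesSeries (R := R) (n := N + 1) N.succ_pos
    have hd : X * d⁄dX R (1 - X ^ (N + 1)) = -(((N + 1 : ℕ) : R⟦X⟧) * X ^ (N + 1)) := by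
      rw [map_sub, Derivation.map_one_eq_zero, mul_sub, mul_zero, zero_sub, X_mul_derivative_X_pow]
    rw [prod_range_succ, divisorSumSeries, sum_range_succ, ← divisorSumSeries, Derivation.leibniz,
      smul_eq_mul, smul_eq_mul]
    linear_combination (∏ n ∈ range N, (1 - X ^ (n + 1) : R⟦X⟧)) * hd + (1 - X ^ (N + 1)) * ih +
      ((N + 1 : ℕ) : R⟦X⟧) * (∏ n ∈ range N, (1 - X ^ (n + 1) : R⟦X⟧)) * hG

theorem coeff_X_mul_derivative (f : R⟦X⟧) (n : ℕ) : coeff n (X * d⁄dX R f) = n * coeff n f := by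
  rcases n with _ | n
  · simp
  · rw [coeff_succ_X_mul, coeff_derivative]; push_cast; ring

theorem natCast_mul_coeff_prod_one_sub_X_pow {M N : ℕ} (hMN : M ≤ N) :
    (M : R) * coeff M (∏ n ∈ range N, (1 - X ^ (n + 1) : R⟦X⟧)) =
      -∑ p ∈ antidiagonal M, coeff p.1 (∏ n ∈ range N, (1 - X ^ (n + 1) : R⟦X⟧)) * sigma1 p.2 := by
  rw [← coeff_X_mul_derivative, X_mul_derivative_prod_one_sub_X_pow, map_neg, coeff_mul]
  congr 1
  refine sum_congr rfl fun p hp => ?_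
  rw [coeff_divisorSumSeries (Nat.le_of_lt_succ (Nat.antidiagonal.snd_lt hp) |>.trans hMN)]

theorem sum_antidiagonal_coeff_pentagonalSeries_mul_sigma1 (M : ℕ) :
    ∑ p ∈ antidiagonal M, coeff p.1 (pentagonalSeries R) * sigma1 p.2 =
      -(M * coeff M (pentagonalSeries R)) := by
  have hcoeff := (Filter.eventually_all_finset (range (M + 1))).2
    fun m _ => coeff_prod_one_sub_X_pow_eventually_eq R m
  obtain ⟨N, hN, hMN⟩ :=
    ((Filter.tendsto_finset_range.eventually hcoeff).and (Filter.eventually_ge_atTop M)).exists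
  rw [← hN M (self_mem_range_succ M), natCast_mul_coeff_prod_one_sub_X_pow hMN, neg_neg]
  refine sum_congr rfl fun p hp => ?_
  rw [hN p.1 (mem_range.2 (Nat.antidiagonal.fst_lt hp))]

theorem coeff_pentagonalSeries_of_eq_sq {m b : ℕ} (h : 24 * m + 1 = b ^ 2) :
    coeff m (pentagonalSeries R) = chi12 b := by
  obtain ⟨k, hkb, hk⟩ := exists_natAbs_eq_and_negOnePow_eq (b := b) (by omega)
  have hm : pentagonal k = m := by
    have := twenty_four_mul_pentagonal_add_one k
    rw [hkb] at this
    omega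
  rw [← hm, coeff_pentagonalSeries_pentagonal, ← hk]

theorem coeff_pentagonalSeries_of_not_isSquare {m : ℕ} (h : ¬ IsSquare (24 * m + 1)) :
    coeff m (pentagonalSeries R) = 0 := by
  refine coeff_pentagonalSeries_eq_zero R ?_
  rintro ⟨k, rfl⟩
  exact h ⟨_, (twenty_four_mul_pentagonal_add_one k).trans (sq _)⟩

end PowerSeries

theorem sum_chi12_mul_sigma1_eq_sum_antidiagonal (M : ℕ) :
    ∑ b ∈ (range (24 * M + 1)).filter (fun b => (0 < b ∧ b ^ 2 < 24 * M + 1) ∧ b ^ 2 % 24 = 1),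
      chi12 b * sigma1 ((24 * M + 1 - b ^ 2) / 24) =
    ∑ p ∈ antidiagonal M, coeff p.1 (pentagonalSeries ℤ) * sigma1 p.2 := by
  rw [Nat.sum_antidiagonal_eq_sum_range_succ_mk]
  refine sum_bij_ne_zero (fun b _ _ => b ^ 2 / 24) ?_ ?_ ?_ ?_
  · intro b hb _
    simp only [mem_filter, mem_range] at hb ⊢
    omega
  · intro b₁ hb₁ _ b₂ hb₂ _ h
    simp only [mem_filter] at hb₁ hb₂
    exact Nat.pow_left_injective two_ne_zero (show b₁ ^ 2 = b₂ ^ 2 by omega)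
  · intro m hm hne
    have hsq : IsSquare (24 * m + 1) := by
      by_contra h
      rw [coeff_pentagonalSeries_of_not_isSquare h, zero_mul] at hne
      exact hne rfl
    have hmM : m ≠ M := by
      rintro rfl
      simp [sigma1] at hne
    obtain ⟨r, hr⟩ := hsq
    rw [← sq] at hr
    simp only [mem_range] at hm
    refine ⟨r, ?_, ?_, by omega⟩
    · simp only [mem_filter, mem_range]
      have : r ≤ r ^ 2 := Nat.le_self_pow two_ne_zero r
      refine ⟨by omega, ⟨Nat.pos_of_ne_zero ?_, by omega⟩, by omega⟩
      rintro rfl; simp at hr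
    · rw [coeff_pentagonalSeries_of_eq_sq hr, Int.cast_id] at hne
      rwa [← hr, show (24 * M + 1 - (24 * m + 1)) / 24 = M - m by omega]
  · intro b hb _
    simp only [mem_filter] at hb
    rw [coeff_pentagonalSeries_of_eq_sq (m := b ^ 2 / 24) (b := b) (by omega)]
    congr 3
    omega

theorem sum_filter_chi12_mul_eq_sub (P : ℕ → Prop) [DecidablePred P] (s : Finset ℕ) (f : ℕ → ℤ) :
    ∑ b ∈ s.filter (fun b => P b ∧ b ^ 2 % 24 = 1), chi12 b * f b =
      ∑ b ∈ s.filter (fun b => P b ∧ (b % 12 = 1 ∨ b % 12 = 11)), f b -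
        ∑ b ∈ s.filter (fun b => P b ∧ (b % 12 = 5 ∨ b % 12 = 7)), f b := by
  have hunion : s.filter (fun b => P b ∧ b ^ 2 % 24 = 1) =
      s.filter (fun b => P b ∧ (b % 12 = 1 ∨ b % 12 = 11)) ∪
        s.filter (fun b => P b ∧ (b % 12 = 5 ∨ b % 12 = 7)) := by
    ext b
    simp only [mem_filter, mem_union, sq_mod_twenty_four_eq_one_iff, ← and_or_left]
    exact and_congr_right fun _ => and_congr_right fun _ => by omega
  rw [hunion, sum_union (disjoint_filter.2 fun b _ _ _ => by omega), sub_eq_add_neg,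
    ← sum_neg_distrib]
  congr 1 <;> refine sum_congr rfl fun b hb => ?_ <;> rw [mem_filter] at hb
  · rw [chi12, if_pos hb.2.2, one_mul]
  · rw [chi12, if_neg (by omega), neg_one_mul]

theorem statement0_general (D : ℕ) (hmod : D % 24 = 1) (hns : ¬ IsSquare D) :
    ∑ b ∈ (Finset.range D).filter
        (fun b => 0 < b ∧ b ^ 2 < D ∧ (b % 12 = 1 ∨ b % 12 = 11)),
      sigma1 ((D - b ^ 2) / 24)
    = ∑ b ∈ (Finset.range D).filter
        (fun b => 0 < b ∧ b ^ 2 < D ∧ (b % 12 = 5 ∨ b % 12 = 7)),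
      sigma1 ((D - b ^ 2) / 24) := by
  obtain ⟨M, rfl⟩ : ∃ M, D = 24 * M + 1 := ⟨D / 24, by omega⟩
  have euler := sum_antidiagonal_coeff_pentagonalSeries_mul_sigma1 (R := ℤ) M
  rw [coeff_pentagonalSeries_of_not_isSquare hns, mul_zero, neg_zero,
    ← sum_chi12_mul_sigma1_eq_sum_antidiagonal, sum_filter_chi12_mul_eq_sub, sub_eq_zero] at euler
  simp only [and_assoc] at euler
  exact_mod_cast euler

/-- Lemma 9.3: for `D ≡ 1 (mod 24)` not a perfect square, the sum of
`σ₁((D - b²)/24)` over `0 < b < √D` with `b ≡ 1, 11 (mod 12)` equals the sum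
over `0 < b < √D` with `b ≡ 5, 7 (mod 12)`. -/
theorem statement0 (D : ℕ) (hD : 0 < D) (hmod : D % 24 = 1) (hns : ¬ IsSquare D) :
    ∑ b ∈ (Finset.range D).filter
        (fun b => 0 < b ∧ b ^ 2 < D ∧ (b % 12 = 1 ∨ b % 12 = 11)),
      sigma1 ((D - b ^ 2) / 24)
    = ∑ b ∈ (Finset.range D).filter
        (fun b => 0 < b ∧ b ^ 2 < D ∧ (b % 12 = 5 ∨ b % 12 = 7)),
      sigma1 ((D - b ^ 2) / 24) :=
  statement0_general D hmod hns
end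

section
/- Let D be a positive integer with D ≡ 0 or 1 (mod 4) that is not a perfect square, and write D = f²D₀ where D₀ is a fundamental discriminant and f ≥ 1 (the conductor). Then ∑_{(ℓ,e,m) ∈ P_D} m·∏_{p prime, p ∣ m} (1 + 1/p) = ∑_{(a,b,c) ∈ P₆(D)} a, an identity of rational numbers (both index sets are finite). -/
open Finset

/-- A positive integer `D₀` is a fundamental discriminant if either
`D₀ ≡ 1 (mod 4)` and `D₀` is squarefree, or `D₀ = 4m` with `m` squarefree and
`m ≡ 2, 3 (mod 4)`. -/
def IsFundamentalDiscriminant (D₀ : ℕ) : Prop :=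
  (D₀ % 4 = 1 ∧ Squarefree D₀) ∨
  (∃ m : ℕ, D₀ = 4 * m ∧ Squarefree m ∧ (m % 4 = 2 ∨ m % 4 = 3))

/-- The prototype set
`P_D = {(ℓ,e,m) ∈ ℤ³ : ℓ > 0, m > 0, D = e² + 24ℓ²m, gcd(e,ℓ,f) = 1}`,
realized as a finset (all members automatically satisfy the coordinate
bounds `|ℓ|,|e|,|m| ≤ D`). -/
noncomputable def protoPD (D f : ℕ) : Finset (ℤ × ℤ × ℤ) :=
  ((Finset.Icc (-(D : ℤ)) (D : ℤ)) ×ˢ (Finset.Icc (-(D : ℤ)) (D : ℤ)) ×ˢ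
      (Finset.Icc (-(D : ℤ)) (D : ℤ))).filter
    (fun x => 0 < x.1 ∧ 0 < x.2.2 ∧ (D : ℤ) = x.2.1 ^ 2 + 24 * x.1 ^ 2 * x.2.2 ∧
      Nat.gcd x.2.1.natAbs (Nat.gcd x.1.natAbs f) = 1)

open Classical in
/-- The prototype set
`P₆(D) = {(a,b,c) ∈ ℤ³ : a > 0 > c, D = b² − 24ac, gcd(f,|b|,s²) = 1}`
where `|c| = c₀ s²` with `c₀` squarefree, realized as a finset. -/
noncomputable def proto6 (D f : ℕ) : Finset (ℤ × ℤ × ℤ) :=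
  ((Finset.Icc (-(D : ℤ)) (D : ℤ)) ×ˢ (Finset.Icc (-(D : ℤ)) (D : ℤ)) ×ˢ
      (Finset.Icc (-(D : ℤ)) (D : ℤ))).filter
    (fun x => 0 < x.1 ∧ x.2.2 < 0 ∧ (D : ℤ) = x.2.1 ^ 2 - 24 * x.1 * x.2.2 ∧
      ∃ c₀ s : ℕ, Squarefree c₀ ∧ x.2.2.natAbs = c₀ * s ^ 2 ∧
        Nat.gcd f (Nat.gcd x.2.1.natAbs (s ^ 2)) = 1)

/-!
Expanding `m ∏_{p ∣ m} (1 + 1/p) = ∑_{t ∣ m, t squarefree} m/t` turns the left side into a sum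
of `a = m/t` over pairs `((ℓ, e, m), t)`. The map `((ℓ, e, m), t) ↦ (a, e, -ℓ²t)` is a bijection
onto `P₆(D)`: since `|c| = t ℓ²` is the unique decomposition of `|c|` into a squarefree part and
a square, it recovers `t = c₀` and `ℓ = s`, and `gcd(e, ℓ, f) = 1 ↔ gcd(f, |e|, ℓ²) = 1`.
-/

theorem Nat.gcd_gcd_sq_eq_one_iff (e l f : ℕ) :
    Nat.gcd f (Nat.gcd e (l ^ 2)) = 1 ↔ Nat.gcd e (Nat.gcd l f) = 1 := by
  rw [← Nat.gcd_assoc, Nat.gcd_comm f, Nat.gcd_comm l, ← Nat.gcd_assoc]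
  exact Nat.coprime_pow_right_iff two_pos _ _

theorem Squarefree.natFactorization_eq_mod_two {c s : ℕ} (hc : Squarefree c) (hs : s ≠ 0)
    (p : ℕ) : c.factorization p = (c * s ^ 2).factorization p % 2 := by
  have := hc.natFactorization_le_one p
  rw [Nat.factorization_mul hc.ne_zero (pow_ne_zero 2 hs), Nat.factorization_pow]
  simp only [Finsupp.add_apply, Finsupp.smul_apply, smul_eq_mul]
  omega

theorem Nat.eq_and_eq_of_squarefree_mul_sq_eq {c₀ c₁ s₀ s₁ : ℕ} (h₀ : Squarefree c₀)
    (h₁ : Squarefree c₁) (hs₀ : s₀ ≠ 0) (hs₁ : s₁ ≠ 0) (h : c₀ * s₀ ^ 2 = c₁ * s₁ ^ 2) :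
    c₀ = c₁ ∧ s₀ = s₁ := by
  have hc : c₀ = c₁ := Nat.factorization_inj h₀.ne_zero h₁.ne_zero <| Finsupp.ext fun p => by
    rw [h₀.natFactorization_eq_mod_two hs₀, h₁.natFactorization_eq_mod_two hs₁, h]
  subst hc
  exact ⟨rfl, Nat.pow_left_injective two_ne_zero (Nat.eq_of_mul_eq_mul_left
    (Nat.pos_of_ne_zero h₀.ne_zero) h)⟩

theorem Nat.mul_prod_primeFactors_one_add_inv {K : Type*} [Semifield K] (n : ℕ) :
    (n : K) * ∏ p ∈ n.primeFactors, (1 + 1 / (p : K)) =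
      ∑ t ∈ n.divisors with Squarefree t, (n : K) / t := by
  rcases eq_or_ne n 0 with rfl | hn
  · simp
  rw [Nat.sum_divisors_filter_squarefree hn, Nat.factors_eq, List.toFinset_coe,
    ← Nat.primeFactors.eq_1, prod_one_add, mul_sum]
  refine sum_congr rfl fun T _ => ?_
  rw [Finset.prod_val]
  simp [div_eq_mul_inv, prod_inv_distrib]

theorem Int.mem_divisors_toNat_iff {m : ℤ} {t : ℕ} (hm : 0 < m) :
    t ∈ m.toNat.divisors ↔ (t : ℤ) ∣ m := by
  lift m to ℕ using hm.le
  rw [Int.toNat_natCast, Nat.mem_divisors, Int.natCast_dvd_natCast]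
  omega

theorem Int.eq_and_eq_of_sq_mul_eq {l l' : ℤ} {t t' : ℕ} (hl : 0 < l) (hl' : 0 < l')
    (ht : Squarefree t) (ht' : Squarefree t') (h : l ^ 2 * t = l' ^ 2 * t') :
    l = l' ∧ t = t' := by
  have habs : t * l.natAbs ^ 2 = t' * l'.natAbs ^ 2 := by
    simpa [Int.natAbs_mul, Int.natAbs_pow, mul_comm] using congrArg Int.natAbs h
  obtain ⟨htt', hll'⟩ :=
    Nat.eq_and_eq_of_squarefree_mul_sq_eq ht ht' (by omega) (by omega) habs
  exact ⟨by omega, htt'⟩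

section Prototypes

variable {D f : ℕ}

theorem mem_protoPD_iff {l e m : ℤ} :
    (l, e, m) ∈ protoPD D f ↔ 0 < l ∧ 0 < m ∧ (D : ℤ) = e ^ 2 + 24 * l ^ 2 * m ∧
      Nat.gcd e.natAbs (Nat.gcd l.natAbs f) = 1 := by
  simp only [protoPD, mem_filter, mem_product, mem_Icc, and_iff_right_iff_imp]
  rintro ⟨hl, hm, hD, -⟩
  have hlm : m ≤ l ^ 2 * m := le_mul_of_one_le_left hm.le (one_le_pow₀ hl)
  refine ⟨⟨?_, ?_⟩, ⟨?_, ?_⟩, ?_, ?_⟩ <;> nlinarith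

theorem mem_proto6_iff {a b c : ℤ} :
    (a, b, c) ∈ proto6 D f ↔ 0 < a ∧ c < 0 ∧ (D : ℤ) = b ^ 2 - 24 * a * c ∧
      ∃ c₀ s : ℕ, Squarefree c₀ ∧ c.natAbs = c₀ * s ^ 2 ∧
        Nat.gcd f (Nat.gcd b.natAbs (s ^ 2)) = 1 := by
  simp only [proto6, mem_filter, mem_product, mem_Icc, and_iff_right_iff_imp]
  rintro ⟨ha, hc, hD, -⟩
  refine ⟨⟨?_, ?_⟩, ⟨?_, ?_⟩, ?_, ?_⟩ <;> nlinarith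

theorem mem_proto6_of_mem_protoPD {l e a : ℤ} {t : ℕ} (ht : Squarefree t)
    (h : (l, e, t * a) ∈ protoPD D f) : (a, e, -(l ^ 2 * t)) ∈ proto6 D f := by
  obtain ⟨hl, hm, hD, hgcd⟩ := mem_protoPD_iff.1 h
  have ht₀ : (0 : ℤ) < t := Nat.cast_pos.2 (Nat.pos_of_ne_zero ht.ne_zero)
  refine mem_proto6_iff.2 ⟨pos_of_mul_pos_right hm ht₀.le, by nlinarith, by rw [hD]; ring,
    t, l.natAbs, ht, ?_, (Nat.gcd_gcd_sq_eq_one_iff _ _ _).2 hgcd⟩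
  rw [Int.natAbs_neg, Int.natAbs_mul, Int.natAbs_pow, Int.natAbs_natCast, mul_comm]

theorem exists_mem_protoPD_of_mem_proto6 {a b c : ℤ} (h : (a, b, c) ∈ proto6 D f) :
    ∃ (l : ℤ) (t : ℕ), Squarefree t ∧ (l, b, t * a) ∈ protoPD D f ∧ c = -(l ^ 2 * t) := by
  obtain ⟨ha, hc, hD, c₀, s, hc₀, hcs, hgcd⟩ := mem_proto6_iff.1 h
  have hs : s ≠ 0 := by rintro rfl; exact hc.ne (by simpa using hcs)
  have hc_eq : c = -(s ^ 2 * c₀ : ℤ) := by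
    have := Int.ofNat_natAbs_of_nonpos hc.le
    rw [hcs] at this
    push_cast at this
    linarith
  have hc₀_pos : (0 : ℤ) < c₀ := Nat.cast_pos.2 (Nat.pos_of_ne_zero hc₀.ne_zero)
  refine ⟨s, c₀, hc₀, mem_protoPD_iff.2 ⟨by positivity, by positivity, ?_, ?_⟩, hc_eq⟩
  · rw [hD, hc_eq]
    ring
  · simpa using (Nat.gcd_gcd_sq_eq_one_iff _ _ _).1 hgcd

noncomputable def protoPDWithSquarefreeDivisor (D f : ℕ) : Finset (Σ _ : ℤ × ℤ × ℤ, ℕ) :=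
  (protoPD D f).sigma fun x => {t ∈ x.2.2.toNat.divisors | Squarefree t}

theorem mem_protoPDWithSquarefreeDivisor_iff {l e m : ℤ} {t : ℕ} :
    ⟨(l, e, m), t⟩ ∈ protoPDWithSquarefreeDivisor D f ↔
      (l, e, m) ∈ protoPD D f ∧ Squarefree t ∧ (t : ℤ) ∣ m := by
  rw [protoPDWithSquarefreeDivisor, mem_sigma, mem_filter]
  refine and_congr_right fun hx => ?_
  rw [Int.mem_divisors_toNat_iff (mem_protoPD_iff.1 hx).2.1, and_comm]

theorem sum_protoPD_eq_sum_protoPDWithSquarefreeDivisor :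
    ∑ x ∈ protoPD D f, (x.2.2 : ℚ) * ∏ p ∈ x.2.2.toNat.primeFactors, (1 + 1 / (p : ℚ)) =
      ∑ σ ∈ protoPDWithSquarefreeDivisor D f, (σ.1.2.2 : ℚ) / σ.2 := by
  rw [protoPDWithSquarefreeDivisor, sum_sigma]
  refine sum_congr rfl fun ⟨l, e, m⟩ hx => ?_
  lift m to ℕ using (mem_protoPD_iff.1 hx).2.1.le
  simpa using Nat.mul_prod_primeFactors_one_add_inv (K := ℚ) m

theorem sum_protoPDWithSquarefreeDivisor_eq_sum_proto6 :
    ∑ σ ∈ protoPDWithSquarefreeDivisor D f, (σ.1.2.2 : ℚ) / σ.2 =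
      ∑ x ∈ proto6 D f, (x.1 : ℚ) := by
  refine sum_bij (fun σ _ => (σ.1.2.2 / σ.2, σ.1.2.1, -(σ.1.1 ^ 2 * σ.2))) ?_ ?_ ?_ ?_
  · rintro ⟨⟨l, e, m⟩, t⟩ hσ
    obtain ⟨hx, ht, a, rfl⟩ := mem_protoPDWithSquarefreeDivisor_iff.1 hσ
    simpa [Int.mul_ediv_cancel_left _ (Nat.cast_ne_zero.2 ht.ne_zero)]
      using mem_proto6_of_mem_protoPD ht hx
  · rintro ⟨⟨l, e, m⟩, t⟩ hσ ⟨⟨l', e', m'⟩, t'⟩ hσ' heq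
    obtain ⟨hx, ht, a, rfl⟩ := mem_protoPDWithSquarefreeDivisor_iff.1 hσ
    obtain ⟨hx', ht', a', rfl⟩ := mem_protoPDWithSquarefreeDivisor_iff.1 hσ'
    simp only [Int.mul_ediv_cancel_left _ (Nat.cast_ne_zero.2 ht.ne_zero),
      Int.mul_ediv_cancel_left _ (Nat.cast_ne_zero.2 ht'.ne_zero), Prod.mk.injEq,
      neg_inj] at heq
    obtain ⟨rfl, rfl, hlt⟩ := heq
    obtain ⟨rfl, rfl⟩ := Int.eq_and_eq_of_sq_mul_eq (mem_protoPD_iff.1 hx).1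
      (mem_protoPD_iff.1 hx').1 ht ht' hlt
    rfl
  · rintro ⟨a, b, c⟩ h
    obtain ⟨l, t, ht, hx, rfl⟩ := exists_mem_protoPD_of_mem_proto6 h
    refine ⟨⟨(l, b, t * a), t⟩,
      mem_protoPDWithSquarefreeDivisor_iff.2 ⟨hx, ht, dvd_mul_right _ _⟩, ?_⟩
    simp [Int.mul_ediv_cancel_left _ (Nat.cast_ne_zero.2 ht.ne_zero)]
  · rintro ⟨⟨l, e, m⟩, t⟩ hσ
    obtain ⟨-, ht, a, rfl⟩ := mem_protoPDWithSquarefreeDivisor_iff.1 hσ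
    simp [Int.mul_ediv_cancel_left _ (Nat.cast_ne_zero.2 ht.ne_zero), ht.ne_zero]

end Prototypes

theorem statement1_general (D f : ℕ) :
    ∑ x ∈ protoPD D f,
        ((x.2.2 : ℚ) * ∏ p ∈ x.2.2.toNat.primeFactors, (1 + 1 / (p : ℚ)))
      = ∑ x ∈ proto6 D f, (x.1 : ℚ) :=
  sum_protoPD_eq_sum_protoPDWithSquarefreeDivisor.trans
    sum_protoPDWithSquarefreeDivisor_eq_sum_proto6

/-- The identity from the proof of Lemma 7.6:
`∑_{(ℓ,e,m) ∈ P_D} m ∏_{p ∣ m} (1 + 1/p) = ∑_{(a,b,c) ∈ P₆(D)} a`. -/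
theorem statement1 (D D₀ f : ℕ) (hpos : 0 < D)
    (hmod : D % 4 = 0 ∨ D % 4 = 1) (hns : ¬ IsSquare D)
    (hf : 1 ≤ f) (hD₀ : IsFundamentalDiscriminant D₀) (hfact : D = f ^ 2 * D₀) :
    ∑ x ∈ protoPD D f,
        ((x.2.2 : ℚ) * ∏ p ∈ x.2.2.toNat.primeFactors, (1 + 1 / (p : ℚ)))
      = ∑ x ∈ proto6 D f, (x.1 : ℚ) :=
  statement1_general D f
end

section
/- For every integer d, the ring ℤ[√d] possesses an ideal of absolute norm 6 if and only if d is not congruent to 2 modulo 3. -/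
/-!
A finite commutative ring of squarefree order `n` has characteristic `n`, so it is `ZMod n`.
Hence `ℤ[√d]` has an ideal of norm `n` exactly when there is a ring map `ℤ[√d] → ZMod n`,
i.e. when `d` is a square modulo `n`. Modulo `6 = 2 · 3` every residue is a square mod `2`,
and the non-squares mod `3` are the residues `≡ 2`.
-/

theorem ringChar_eq_card_of_squarefree {R : Type*} [CommRing R] [Fintype R]
    (h : Squarefree (Fintype.card R)) : ringChar R = Fintype.card R := by
  refine Nat.dvd_antisymm (ringChar.dvd (Nat.cast_card_eq_zero R)) ?_
  rw [← Nat.prod_primeFactors_of_squarefree h]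
  refine Finset.prod_primes_dvd _ (fun p hp => (Nat.prime_of_mem_primeFactors hp).prime)
    fun p hp => ?_
  have : Fact p.Prime := ⟨Nat.prime_of_mem_primeFactors hp⟩
  exact (prime_dvd_char_iff_dvd_card p).2 (Nat.dvd_of_mem_primeFactors hp)

theorem Ideal.exists_card_quotient_eq_iff_nonempty_ringHom {A : Type*} [CommRing A] {n : ℕ}
    (hn : Squarefree n) :
    (∃ I : Ideal A, Nat.card (A ⧸ I) = n) ↔ Nonempty (A →+* ZMod n) := by
  have : NeZero n := ⟨hn.ne_zero⟩
  constructor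
  · rintro ⟨I, hI⟩
    have : Finite (A ⧸ I) := Nat.finite_of_card_ne_zero (hI ▸ hn.ne_zero)
    have : Fintype (A ⧸ I) := Fintype.ofFinite _
    rw [Nat.card_eq_fintype_card] at hI
    have hchar : ringChar (A ⧸ I) = n := hI ▸ ringChar_eq_card_of_squarefree (hI ▸ hn)
    have : CharP (A ⧸ I) n := hchar ▸ ringChar.charP _
    exact ⟨(ZMod.ringEquiv (A ⧸ I) hI).symm.toRingHom.comp (Ideal.Quotient.mk I)⟩
  · rintro ⟨f⟩
    refine ⟨RingHom.ker f, ?_⟩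
    rw [Nat.card_congr (RingHom.quotientKerEquivOfSurjective (ZMod.ringHom_surjective f)).toEquiv,
      Nat.card_zmod]

theorem Zsqrtd.nonempty_ringHom_iff_isSquare {R : Type*} [CommRing R] {d : ℤ} :
    Nonempty (ℤ√d →+* R) ↔ IsSquare (d : R) :=
  ⟨fun ⟨f⟩ => ⟨f Zsqrtd.sqrtd, by rw [← map_mul, Zsqrtd.dmuld, map_intCast]⟩,
    fun ⟨r, hr⟩ => ⟨Zsqrtd.lift ⟨r, hr.symm⟩⟩⟩

theorem ZMod.isSquare_intCast_six_iff (d : ℤ) : IsSquare (d : ZMod 6) ↔ d % 3 ≠ 2 := by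
  rw [← ZMod.intCast_mod d 6, show d % 3 = d % 6 % 3 by omega]
  have h0 : 0 ≤ d % 6 := by omega
  have h6 : d % 6 < 6 := by omega
  generalize d % 6 = r at h0 h6
  interval_cases r <;> decide

/-- The ring `ℤ[√d]` has an ideal of absolute norm 6 (the absolute norm of an
ideal being the cardinality of the quotient ring) if and only if
`d ≢ 2 (mod 3)`. -/
theorem statement2 (d : ℤ) :
    (∃ I : Ideal (ℤ√d), Nat.card ((ℤ√d) ⧸ I) = 6) ↔ ¬ d % 3 = 2 := by
  rw [Ideal.exists_card_quotient_eq_iff_nonempty_ringHom (by decide +kernel),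
    Zsqrtd.nonempty_ringHom_iff_isSquare, ZMod.isSquare_intCast_six_iff]
end

section
/- Let d be an integer with d ≢ 2 (mod 3). The number of ideals of ℤ[√d] of absolute norm 6 is exactly 1 if 3 divides d, and exactly 2 if d ≡ 1 (mod 3). -/
open Zsqrtd

private lemma card_quot_ker_lift (d : ℤ) (s : {r : ZMod 6 // r * r = (d : ZMod 6)}) :
    Nat.card (ℤ√d ⧸ RingHom.ker (Zsqrtd.lift s)) = 6 := by
  have hsurj : Function.Surjective (Zsqrtd.lift s) := ZMod.ringHom_surjective _
  rw [Nat.card_congr (RingHom.quotientKerEquivOfSurjective hsurj).toEquiv, Nat.card_zmod]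

private lemma lift_ker_inj (d : ℤ) (s t : {r : ZMod 6 // r * r = (d : ZMod 6)})
    (h : RingHom.ker (Zsqrtd.lift s) = RingHom.ker (Zsqrtd.lift t)) : s = t := by
  have hs : Function.Surjective (Zsqrtd.lift s) := ZMod.ringHom_surjective _
  have cond : ∀ a ∈ RingHom.ker (Zsqrtd.lift s), (Zsqrtd.lift t) a = 0 := by
    intro a ha
    rw [h] at ha
    exact ha
  set e := RingHom.quotientKerEquivOfSurjective hs with he
  have key : ∀ x : ℤ√d, (Zsqrtd.lift t) x = (Zsqrtd.lift s) x := by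
    intro x
    have h1 : ((Ideal.Quotient.lift (RingHom.ker (Zsqrtd.lift s)) (Zsqrtd.lift t) cond).comp
        (e.symm : ZMod 6 →+* (ℤ√d ⧸ RingHom.ker (Zsqrtd.lift s)))) = RingHom.id (ZMod 6) :=
      RingHom.ext_zmod _ _
    have h2' : e (Ideal.Quotient.mk _ x) = (Zsqrtd.lift s) x := by
      simp [he, RingHom.quotientKerEquivOfSurjective, RingHom.kerLift_mk]
    have h2 : e.symm ((Zsqrtd.lift s) x) = Ideal.Quotient.mk _ x := by
      rw [← h2', RingEquiv.symm_apply_apply]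
    calc (Zsqrtd.lift t) x
        = (Ideal.Quotient.lift (RingHom.ker (Zsqrtd.lift s)) (Zsqrtd.lift t) cond)
            (Ideal.Quotient.mk _ x) := rfl
      _ = (Ideal.Quotient.lift (RingHom.ker (Zsqrtd.lift s)) (Zsqrtd.lift t) cond)
            (e.symm ((Zsqrtd.lift s) x)) := by rw [h2]
      _ = (Zsqrtd.lift s) x := RingHom.congr_fun h1 _
  exact Zsqrtd.lift.injective (RingHom.ext key).symm

private lemma exists_ringHom (d : ℤ) (I : Ideal (ℤ√d)) (hI : Nat.card (ℤ√d ⧸ I) = 6) :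
    ∃ s : {r : ZMod 6 // r * r = (d : ZMod 6)}, RingHom.ker (Zsqrtd.lift s) = I := by
  haveI : Finite (ℤ√d ⧸ I) := Nat.finite_of_card_ne_zero (by omega)
  haveI : Fintype (ℤ√d ⧸ I) := Fintype.ofFinite _
  have hcard : Fintype.card (ℤ√d ⧸ I) = 6 := by rwa [← Nat.card_eq_fintype_card]
  -- addOrderOf 1 = 6
  have hdvd1 : addOrderOf (1 : ℤ√d ⧸ I) ∣ 6 := by
    rw [← hI]; exact addOrderOf_dvd_natCard _
  have hdvd_all : ∀ x : ℤ√d ⧸ I, addOrderOf x ∣ addOrderOf (1 : ℤ√d ⧸ I) := by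
    intro x
    apply addOrderOf_dvd_of_nsmul_eq_zero
    have : (addOrderOf (1 : ℤ√d ⧸ I)) • x = ((addOrderOf (1 : ℤ√d ⧸ I)) • (1 : ℤ√d ⧸ I)) * x := by
      rw [smul_mul_assoc, one_mul]
    rw [this, addOrderOf_nsmul_eq_zero, zero_mul]
  obtain ⟨x2, hx2⟩ := exists_prime_addOrderOf_dvd_card (G := ℤ√d ⧸ I) 2 (by rw [hcard]; norm_num)
  obtain ⟨x3, hx3⟩ := exists_prime_addOrderOf_dvd_card (G := ℤ√d ⧸ I) 3 (by rw [hcard]; norm_num)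
  have h2 : 2 ∣ addOrderOf (1 : ℤ√d ⧸ I) := hx2 ▸ hdvd_all x2
  have h3 : 3 ∣ addOrderOf (1 : ℤ√d ⧸ I) := hx3 ▸ hdvd_all x3
  have h6 : addOrderOf (1 : ℤ√d ⧸ I) = 6 :=
    Nat.dvd_antisymm hdvd1 (Nat.Coprime.mul_dvd_of_dvd_of_dvd (by norm_num) h2 h3)
  haveI : CharP (ℤ√d ⧸ I) 6 := h6 ▸ CharP.addOrderOf_one _
  have hbij := ZMod.castHom_bijective (ℤ√d ⧸ I) (n := 6) hcard
  let e : ZMod 6 ≃+* (ℤ√d ⧸ I) := RingEquiv.ofBijective _ hbij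
  let f : ℤ√d →+* ZMod 6 := (e.symm : (ℤ√d ⧸ I) →+* ZMod 6).comp (Ideal.Quotient.mk I)
  have hferoot : f Zsqrtd.sqrtd * f Zsqrtd.sqrtd = (d : ZMod 6) := by
    rw [← map_mul, Zsqrtd.dmuld, map_intCast]
  refine ⟨⟨f Zsqrtd.sqrtd, hferoot⟩, ?_⟩
  have hfeq : Zsqrtd.lift ⟨f Zsqrtd.sqrtd, hferoot⟩ = f := by
    apply Zsqrtd.hom_ext
    simp
  rw [hfeq]
  ext x
  simp only [RingHom.mem_ker, f, RingHom.comp_apply, RingEquiv.coe_toRingHom]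
  rw [EmbeddingLike.map_eq_zero_iff]
  exact Ideal.Quotient.eq_zero_iff_mem

private lemma card_eq (d : ℤ) :
    {I : Ideal (ℤ√d) | Nat.card ((ℤ√d) ⧸ I) = 6}.ncard
      = {s : ZMod 6 | s * s = (d : ZMod 6)}.ncard := by
  rw [← Nat.card_coe_set_eq, ← Nat.card_coe_set_eq]
  apply Nat.card_congr
  refine (Equiv.ofBijective
    (fun s : {s : ZMod 6 | s * s = (d : ZMod 6)} =>
      (⟨RingHom.ker (Zsqrtd.lift ⟨s.1, s.2⟩), card_quot_ker_lift d ⟨s.1, s.2⟩⟩ :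
        {I : Ideal (ℤ√d) | Nat.card ((ℤ√d) ⧸ I) = 6})) ⟨?_, ?_⟩).symm
  · intro s t hst
    have := lift_ker_inj d ⟨s.1, s.2⟩ ⟨t.1, t.2⟩ (congrArg Subtype.val hst)
    exact Subtype.ext (congrArg Subtype.val this)
  · rintro ⟨I, hI⟩
    obtain ⟨⟨r, hr⟩, hker⟩ := exists_ringHom d I hI
    exact ⟨⟨r, hr⟩, Subtype.ext hker⟩

private lemma zmod6_count (c : ZMod 6) :
    ((c = 0 ∨ c = 3) → {s : ZMod 6 | s * s = c}.ncard = 1) ∧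
    ((c = 1 ∨ c = 4) → {s : ZMod 6 | s * s = c}.ncard = 2) := by
  constructor
  · rintro (rfl | rfl)
    · have : {s : ZMod 6 | s * s = 0} = {0} := by ext s; revert s; decide
      rw [this, Set.ncard_singleton]
    · have : {s : ZMod 6 | s * s = 3} = {3} := by ext s; revert s; decide
      rw [this, Set.ncard_singleton]
  · rintro (rfl | rfl)
    · have : {s : ZMod 6 | s * s = 1} = {1, 5} := by ext s; revert s; decide
      rw [this, Set.ncard_pair (by decide)]
    · have : {s : ZMod 6 | s * s = 4} = {2, 4} := by ext s; revert s; decide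
      rw [this, Set.ncard_pair (by decide)]

/-- For `d ≢ 2 (mod 3)`, the number of ideals of `ℤ[√d]` of absolute norm 6
(the absolute norm of an ideal being the cardinality of the quotient ring)
is exactly 1 if `3 ∣ d` and exactly 2 if `d ≡ 1 (mod 3)`. -/
theorem statement3 (d : ℤ) (h : ¬ d % 3 = 2) :
    (3 ∣ d → {I : Ideal (ℤ√d) | Nat.card ((ℤ√d) ⧸ I) = 6}.ncard = 1) ∧
    (d % 3 = 1 → {I : Ideal (ℤ√d) | Nat.card ((ℤ√d) ⧸ I) = 6}.ncard = 2) := by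
  have hcast : (ZMod.castHom (by norm_num : (3:ℕ) ∣ 6) (ZMod 3)) ((d : ZMod 6)) = (d : ZMod 3) :=
    map_intCast _ d
  constructor
  · intro h3
    rw [card_eq]
    apply (zmod6_count _).1
    have hd3 : ((d : ZMod 3)) = 0 := by
      rwa [ZMod.intCast_zmod_eq_zero_iff_dvd]
    rw [← hcast] at hd3
    revert hd3
    generalize (d : ZMod 6) = c
    revert c; decide
  · intro h1
    rw [card_eq]
    apply (zmod6_count _).2
    have hd3 : ((d : ZMod 3)) = 1 := by
      have : d = 3 * (d / 3) + 1 := by omega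
      rw [this]; push_cast
      rw [show (3 : ZMod 3) = 0 from by decide, zero_mul, zero_add]
    rw [← hcast] at hd3
    revert hd3
    generalize (d : ZMod 6) = c
    revert c; decide
end

section
/- Let d be an integer and let 𝔟 be an ideal of ℤ[√d] whose absolute norm is 6. Then the subgroup Γ₀(𝔟) := { M ∈ SL₂(ℤ[√d]) : the upper-right entry of M lies in 𝔟 } has index 12 in SL₂(ℤ[√d]). -/
open Matrix

/-- The subgroup `Γ₀(𝔟)` of `SL₂(ℤ[√d])` consisting of the matrices whose
upper-right entry lies in the ideal `𝔟`. -/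
def GammaIdeal (d : ℤ) (b : Ideal (ℤ√d)) :
    Subgroup (Matrix.SpecialLinearGroup (Fin 2) (ℤ√d)) where
  carrier := {M | M.1 0 1 ∈ b}
  one_mem' := by
    simp [Set.mem_setOf_eq]
  mul_mem' := by
    intro A B hA hB
    simp only [Set.mem_setOf_eq] at *
    have h : (A * B).1 0 1 = A.1 0 0 * B.1 0 1 + A.1 0 1 * B.1 1 1 := by
      simp [Matrix.SpecialLinearGroup.coe_mul, Matrix.mul_apply, Fin.sum_univ_two]
    rw [h]
    exact b.add_mem (b.mul_mem_left _ hB) (b.mul_mem_right _ hA)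
  inv_mem' := by
    intro A hA
    simp only [Set.mem_setOf_eq] at *
    have h : (A⁻¹).1 0 1 = -(A.1 0 1) := by
      rw [Matrix.SpecialLinearGroup.coe_inv, Matrix.adjugate_fin_two]
      simp
    rw [h]
    exact b.neg_mem hA

namespace Statement6Aux

/-- Lifting table: for each unimodular pair `(x,y)` mod 6, an integer matrix
`(a, b₀, c, d₀)` with `a*d₀ - b₀*c = 1` and `(b₀, d₀) ≡ (x, y) [MOD 6]`. -/
def Wtab : Nat → Nat → ℤ × ℤ × ℤ × ℤ
  | 0, 1 => (1, 0, -20, 1)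
  | 0, 5 => (-1, 0, -20, -1)
  | 1, 0 => (-20, 1, -1, 0)
  | 1, 1 => (-19, 1, -20, 1)
  | 1, 2 => (-9, 1, -19, 2)
  | 1, 3 => (-6, 1, -19, 3)
  | 1, 4 => (-4, 1, -17, 4)
  | 1, 5 => (-3, 1, -16, 5)
  | 2, 1 => (-19, 2, -10, 1)
  | 2, 3 => (-13, 2, -20, 3)
  | 2, 5 => (-7, 2, -18, 5)
  | 3, 1 => (-20, 3, -7, 1)
  | 3, 2 => (-19, 3, -13, 2)
  | 3, 4 => (-14, 3, -19, 4)
  | 3, 5 => (-10, 3, -17, 5)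
  | 4, 1 => (-19, 4, -5, 1)
  | 4, 3 => (-17, 4, -13, 3)
  | 4, 5 => (-15, 4, -19, 5)
  | 5, 0 => (-14, 5, -17, 6)
  | 5, 1 => (-19, 5, -4, 1)
  | 5, 2 => (-17, 5, -7, 2)
  | 5, 3 => (-18, 5, -11, 3)
  | 5, 4 => (-16, 5, -13, 4)
  | 5, 5 => (-9, 5, -20, 11)
  | _, _ => (1, 0, 0, 1)

set_option maxRecDepth 10000 in
lemma Wkey : ∀ x y u v : ZMod 6, u * x + v * y = 1 →
    (Wtab x.val y.val).1 * (Wtab x.val y.val).2.2.2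
      - (Wtab x.val y.val).2.1 * (Wtab x.val y.val).2.2.1 = 1 ∧
    ((Wtab x.val y.val).2.2.2 : ZMod 6) * x - ((Wtab x.val y.val).2.1 : ZMod 6) * y = 0 := by
  decide

/-- The subgroup of `SL₂(ZMod 6)` of matrices with zero upper-right entry. -/
def T6 : Subgroup (Matrix.SpecialLinearGroup (Fin 2) (ZMod 6)) where
  carrier := {M | M.1 0 1 = 0}
  one_mem' := by simp [Set.mem_setOf_eq]
  mul_mem' := by
    intro A B hA hB
    simp only [Set.mem_setOf_eq] at *
    have h : (A * B).1 0 1 = A.1 0 0 * B.1 0 1 + A.1 0 1 * B.1 1 1 := by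
      simp [Matrix.SpecialLinearGroup.coe_mul, Matrix.mul_apply, Fin.sum_univ_two]
    rw [h, hA, hB]
    ring
  inv_mem' := by
    intro A hA
    simp only [Set.mem_setOf_eq] at *
    have h : (A⁻¹).1 0 1 = -(A.1 0 1) := by
      rw [Matrix.SpecialLinearGroup.coe_inv, Matrix.adjugate_fin_two]
      simp
    rw [h, hA, neg_zero]

set_option maxRecDepth 10000 in
lemma card_SL2 : Nat.card (Matrix.SpecialLinearGroup (Fin 2) (ZMod 6)) = 144 := by
  rw [Nat.card_eq_fintype_card]; decide

set_option maxRecDepth 10000 in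
lemma card_T6 : Nat.card T6 = 12 := by
  rw [Nat.card_congr (Equiv.subtypeEquivRight (fun x => Iff.rfl) :
    {x : Matrix.SpecialLinearGroup (Fin 2) (ZMod 6) // x ∈ T6} ≃
    {x : Matrix.SpecialLinearGroup (Fin 2) (ZMod 6) // x.1 0 1 = 0})]
  rw [Nat.card_eq_fintype_card]
  decide

lemma T6_mem (M : Matrix.SpecialLinearGroup (Fin 2) (ZMod 6)) : M ∈ T6 ↔ M.1 0 1 = 0 :=
  Iff.rfl

lemma T6_index : T6.index = 12 := by
  have h := T6.index_mul_card
  rw [card_SL2, card_T6] at h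
  omega

end Statement6Aux

/-- If `𝔟` is an ideal of `ℤ[√d]` of absolute norm 6 (the absolute norm being
the cardinality of the quotient ring), then `Γ₀(𝔟)` has index 12 in
`SL₂(ℤ[√d])`. -/
theorem statement6 (d : ℤ) (b : Ideal (ℤ√d)) (hb : Nat.card ((ℤ√d) ⧸ b) = 6) :
    (GammaIdeal d b).index = 12 := by
  set R := (ℤ√d) ⧸ b with hR
  have hfin : Finite R := Nat.finite_of_card_ne_zero (by omega)
  letI : Fintype R := Fintype.ofFinite _
  have hcard : Fintype.card R = 6 := by rw [← Nat.card_eq_fintype_card]; exact hb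
  -- characteristic of R is 6
  have h2 : (2:ℕ) ∣ ringChar R := (prime_dvd_char_iff_dvd_card 2).2 (by rw [hcard]; norm_num)
  have h3 : (3:ℕ) ∣ ringChar R := (prime_dvd_char_iff_dvd_card 3).2 (by rw [hcard]; norm_num)
  have hdvd : ringChar R ∣ 6 := by
    have h0 : ((6:ℕ) : R) = 0 := by rw [← hcard]; exact Nat.cast_card_eq_zero R
    exact ringChar.dvd h0
  have hchar : ringChar R = 6 := by
    refine Nat.dvd_antisymm hdvd ?_
    have : (6:ℕ) = 2 * 3 := rfl
    rw [this]
    exact Nat.Coprime.mul_dvd_of_dvd_of_dvd (by norm_num) h2 h3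
  haveI : CharP R 6 := hchar ▸ ringChar.charP R
  -- ring equiv ZMod 6 ≃+* R
  let e : ZMod 6 ≃+* R := RingEquiv.ofBijective _ (ZMod.castHom_bijective R hcard)
  let f : ℤ√d →+* ZMod 6 := (e.symm : R ≃+* ZMod 6).toRingHom.comp (Ideal.Quotient.mk b)
  have hker : ∀ z : ℤ√d, f z = 0 ↔ z ∈ b := by
    intro z
    constructor
    · intro h
      have h1 : e (e.symm (Ideal.Quotient.mk b z)) = e 0 := congrArg e h
      rw [RingEquiv.apply_symm_apply, map_zero] at h1
      exact (Ideal.Quotient.eq_zero_iff_mem).1 h1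
    · intro h
      have : Ideal.Quotient.mk b z = 0 := (Ideal.Quotient.eq_zero_iff_mem).2 h
      simp [f, this]
  -- the reduction map on SL2
  let φ : Matrix.SpecialLinearGroup (Fin 2) (ℤ√d) →* Matrix.SpecialLinearGroup (Fin 2) (ZMod 6) :=
    Matrix.SpecialLinearGroup.map f
  have hφ : ∀ (M : Matrix.SpecialLinearGroup (Fin 2) (ℤ√d)) (i j : Fin 2),
      (φ M).1 i j = f (M.1 i j) := fun M i j => rfl
  let ι : Matrix.SpecialLinearGroup (Fin 2) ℤ →* Matrix.SpecialLinearGroup (Fin 2) (ℤ√d) :=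
    Matrix.SpecialLinearGroup.map (Int.castRingHom (ℤ√d))
  have hφι : ∀ (A : Matrix.SpecialLinearGroup (Fin 2) ℤ) (i j : Fin 2),
      (φ (ι A)).1 i j = ((A.1 i j : ℤ) : ZMod 6) := by
    intro A i j
    rw [hφ]
    show f ((A.1 i j : ℤ) : ℤ√d) = _
    exact map_intCast f _
  -- action on the coset space
  letI act : MulAction (Matrix.SpecialLinearGroup (Fin 2) (ℤ√d))
      (Matrix.SpecialLinearGroup (Fin 2) (ZMod 6) ⧸ Statement6Aux.T6) := MulAction.compHom _ φ
  have hsmul : ∀ (g : Matrix.SpecialLinearGroup (Fin 2) (ℤ√d))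
      (h : Matrix.SpecialLinearGroup (Fin 2) (ZMod 6)),
      g • ((h : Matrix.SpecialLinearGroup (Fin 2) (ZMod 6) ⧸ Statement6Aux.T6)) = ((φ g * h : _) : _) :=
    fun g h => rfl
  -- GammaIdeal is the stabilizer of the trivial coset
  have hstab : GammaIdeal d b = MulAction.stabilizer (Matrix.SpecialLinearGroup (Fin 2) (ℤ√d))
      (((1 : Matrix.SpecialLinearGroup (Fin 2) (ZMod 6)) :
        Matrix.SpecialLinearGroup (Fin 2) (ZMod 6) ⧸ Statement6Aux.T6)) := by
    ext g
    rw [MulAction.mem_stabilizer_iff, hsmul, mul_one, QuotientGroup.eq, mul_one,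
      Statement6Aux.T6.inv_mem_iff, Statement6Aux.T6_mem, hφ, hker]
    exact Iff.rfl
  -- transitivity of the action
  haveI htrans : MulAction.IsPretransitive (Matrix.SpecialLinearGroup (Fin 2) (ℤ√d))
      (Matrix.SpecialLinearGroup (Fin 2) (ZMod 6) ⧸ Statement6Aux.T6) := by
    constructor
    have key : ∀ h : Matrix.SpecialLinearGroup (Fin 2) (ZMod 6),
        ∃ g : Matrix.SpecialLinearGroup (Fin 2) (ℤ√d),
          g • (((1 : Matrix.SpecialLinearGroup (Fin 2) (ZMod 6)) :
            Matrix.SpecialLinearGroup (Fin 2) (ZMod 6) ⧸ Statement6Aux.T6)) = (h : _) := by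
      intro h
      set x := h.1 0 1 with hx
      set y := h.1 1 1 with hy
      have hdet := h.2
      rw [Matrix.det_fin_two] at hdet
      have huni : (-(h.1 1 0)) * x + (h.1 0 0) * y = 1 := by
        rw [hx, hy]; linear_combination hdet
      obtain ⟨hdet1, hrel⟩ := Statement6Aux.Wkey x y _ _ huni
      set a := (Statement6Aux.Wtab x.val y.val).1
      set b0 := (Statement6Aux.Wtab x.val y.val).2.1
      set c := (Statement6Aux.Wtab x.val y.val).2.2.1
      set d0 := (Statement6Aux.Wtab x.val y.val).2.2.2
      let A : Matrix.SpecialLinearGroup (Fin 2) ℤ :=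
        ⟨!![a, b0; c, d0], by rw [Matrix.det_fin_two_of]; exact hdet1⟩
      refine ⟨ι A, ?_⟩
      rw [hsmul, mul_one, QuotientGroup.eq]
      rw [Statement6Aux.T6_mem]
      have hmul : ((φ (ι A))⁻¹ * h).1 0 1
          = ((φ (ι A))⁻¹).1 0 0 * h.1 0 1 + ((φ (ι A))⁻¹).1 0 1 * h.1 1 1 := by
        simp [Matrix.SpecialLinearGroup.coe_mul, Matrix.mul_apply, Fin.sum_univ_two]
      have hinv00 : ((φ (ι A))⁻¹).1 0 0 = (φ (ι A)).1 1 1 := by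
        rw [Matrix.SpecialLinearGroup.coe_inv, Matrix.adjugate_fin_two]
        simp
      have hinv01 : ((φ (ι A))⁻¹).1 0 1 = -((φ (ι A)).1 0 1) := by
        rw [Matrix.SpecialLinearGroup.coe_inv, Matrix.adjugate_fin_two]
        simp
      rw [hmul, hinv00, hinv01, hφι, hφι]
      have e11 : A.1 1 1 = d0 := rfl
      have e01 : A.1 0 1 = b0 := rfl
      rw [e11, e01, ← hx, ← hy]
      linear_combination hrel
    intro p q
    obtain ⟨h1, rfl⟩ := QuotientGroup.mk_surjective p
    obtain ⟨h2, rfl⟩ := QuotientGroup.mk_surjective q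
    obtain ⟨g1, hg1⟩ := key h1
    obtain ⟨g2, hg2⟩ := key h2
    refine ⟨g2 * g1⁻¹, ?_⟩
    rw [mul_smul, ← hg1, inv_smul_smul, hg2]
  rw [hstab, MulAction.index_stabilizer_of_transitive]
  have : Nat.card (Matrix.SpecialLinearGroup (Fin 2) (ZMod 6) ⧸ Statement6Aux.T6) = Statement6Aux.T6.index := rfl
  rw [this, Statement6Aux.T6_index]
end

section
/- Let a, b, c be integers with a ≠ 0, set D := b² − 4ac, and assume D > 0 and D is not a perfect square. Let d₁, d₂ be positive coprime integers. Working with 2×2 real matrices, set λ = (−b + √D)/(2a), λ' = (−b − √D)/(2a), B = [[1, 1], [λ, λ']], P = [[d₁, 0], [0, d₂]], and Γ = [[(D + √D)/2, 0], [0, (D − √D)/2]]. Then there exists a 2×2 integer matrix R such that Γ·(B⁻¹·P) = (B⁻¹·P)·R (with R viewed as a real matrix) if and only if d₁ divides a and d₂ divides c. -/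
/-!
The columns `(1, λ)`, `(1, λ')` of `B` are eigenvectors, with eigenvalues `(D ± √D)/2`, of
`N = [[(D+b)/2, a], [-c, (D-b)/2]]`, which is integral because `D ≡ b (mod 2)`; that is,
`B Γ = N B`. Hence `Γ (B⁻¹P) = (B⁻¹P) R` iff `N P = P R`, i.e.
`R = P⁻¹ N P = [[(D+b)/2, a d₂/d₁], [-c d₁/d₂, (D-b)/2]]`, which is integral iff `d₁ ∣ a d₂` and
`d₂ ∣ c d₁`, that is, by coprimality, iff `d₁ ∣ a` and `d₂ ∣ c`.
-/

open Matrix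

section Intertwining
variable {n R : Type*} [Fintype n] [CommRing R]

theorem Matrix.exists_map_mul_eq_mul_map_iff {S : Type*} [CommRing S] {f : R →+* S}
    (hf : Function.Injective f) (N P : Matrix n n R) :
    (∃ M : Matrix n n R, N.map f * P.map f = P.map f * M.map f) ↔ ∃ M, N * P = P * M := by
  simp_rw [← Matrix.map_mul, (map_injective hf).eq_iff]

variable [DecidableEq n]

theorem Matrix.intertwines_inv_mul_iff {B G N : Matrix n n R} (hB : IsUnit B.det)
    (hBG : B * G = N * B) (P M : Matrix n n R) :
    G * (B⁻¹ * P) = B⁻¹ * P * M ↔ N * P = P * M := by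
  have hG : G * B⁻¹ = B⁻¹ * N := by
    calc G * B⁻¹ = B⁻¹ * (B * G) * B⁻¹ := by rw [← mul_assoc, nonsing_inv_mul _ hB, one_mul]
      _ = B⁻¹ * N := by rw [hBG, mul_assoc, mul_assoc, mul_nonsing_inv _ hB, mul_one]
  rw [← mul_assoc, hG, mul_assoc, mul_assoc,
    (isUnit_nonsing_inv_iff.2 ((isUnit_iff_isUnit_det B).2 hB)).mul_right_inj]

theorem Matrix.exists_mul_diagonal_eq_diagonal_mul_iff (N : Matrix n n R) (d : n → R) :
    (∃ M : Matrix n n R, N * diagonal d = diagonal d * M) ↔ ∀ i j, d i ∣ N i j * d j := by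
  simp only [← Matrix.ext_iff, mul_diagonal, diagonal_mul, Dvd.dvd, eq_comm (a := N _ _ * _)]
  constructor
  · rintro ⟨M, hM⟩ i j
    exact ⟨M i j, hM i j⟩
  · intro h
    choose M hM using h
    exact ⟨Matrix.of M, hM⟩

end Intertwining

theorem Matrix.exists_mul_diagonal_fin_two_iff {R : Type*} [CommRing R]
    (N : Matrix (Fin 2) (Fin 2) R) {d₁ d₂ : R} (hco : IsCoprime d₁ d₂) :
    (∃ M, N * diagonal ![d₁, d₂] = diagonal ![d₁, d₂] * M) ↔ d₁ ∣ N 0 1 ∧ d₂ ∣ N 1 0 := by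
  rw [exists_mul_diagonal_eq_diagonal_mul_iff]
  simp only [Fin.forall_fin_two, Matrix.cons_val_zero, Matrix.cons_val_one, dvd_mul_left,
    true_and, and_true]
  exact and_congr ⟨hco.dvd_of_dvd_mul_right, (dvd_mul_of_dvd_left · _)⟩
    ⟨hco.symm.dvd_of_dvd_mul_right, (dvd_mul_of_dvd_left · _)⟩

theorem even_sq_sub_mul_add (a b c : ℤ) : Even (b ^ 2 - 4 * a * c + b) := by
  have h : b ^ 2 - 4 * a * c + b = b * (b + 1) - 2 * (2 * a * c) := by ring
  rw [h]
  exact (Int.even_mul_succ_self b).sub (even_two_mul _)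

section QuadraticRoots
variable {a b c D s : ℝ}

theorem isUnit_det_quadRoots (ha : a ≠ 0) (hs : s ≠ 0) :
    IsUnit (det !![1, 1; (-b + s) / (2 * a), (-b - s) / (2 * a)]) := by
  have h : det !![1, 1; (-b + s) / (2 * a), (-b - s) / (2 * a)] = -s / a := by
    rw [det_fin_two_of]; ring
  rw [h]
  exact (div_ne_zero (neg_ne_zero.2 hs) ha).isUnit

theorem quadRoots_mul_diag (ha : a ≠ 0) (hs : s ^ 2 = D) (hD : D = b ^ 2 - 4 * a * c) :
    !![1, 1; (-b + s) / (2 * a), (-b - s) / (2 * a)] * !![(D + s) / 2, 0; 0, (D - s) / 2]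
      = !![(D + b) / 2, a; -c, (D - b) / 2] * !![1, 1; (-b + s) / (2 * a), (-b - s) / (2 * a)] := by
  subst hD
  rw [mul_fin_two, mul_fin_two]
  ext i j
  fin_cases i <;> fin_cases j <;>
    simp only [one_mul, mul_zero, add_zero, zero_add, mul_one, Fin.zero_eta, Fin.mk_one,
      Fin.isValue, of_apply, cons_val', cons_val_zero, cons_val_one, cons_val_fin_one] <;>
    field_simp
  · ring
  · ring
  · linear_combination hs
  · linear_combination hs

end QuadraticRoots

theorem statement12_general (a b c : ℤ) (ha : a ≠ 0) (D : ℤ) (hD : D = b ^ 2 - 4 * a * c)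
    (hDpos : 0 < D) (d₁ d₂ : ℤ)
    (hco : IsCoprime d₁ d₂) :
    (∃ R : Matrix (Fin 2) (Fin 2) ℤ,
        (!![((D : ℝ) + Real.sqrt (D : ℝ)) / 2, 0; 0, ((D : ℝ) - Real.sqrt (D : ℝ)) / 2]) *
          ((!![(1 : ℝ), 1;
              (-(b : ℝ) + Real.sqrt (D : ℝ)) / (2 * (a : ℝ)),
              (-(b : ℝ) - Real.sqrt (D : ℝ)) / (2 * (a : ℝ))])⁻¹ *
            !![(d₁ : ℝ), 0; 0, (d₂ : ℝ)])
        = ((!![(1 : ℝ), 1;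
              (-(b : ℝ) + Real.sqrt (D : ℝ)) / (2 * (a : ℝ)),
              (-(b : ℝ) - Real.sqrt (D : ℝ)) / (2 * (a : ℝ))])⁻¹ *
            !![(d₁ : ℝ), 0; 0, (d₂ : ℝ)]) *
          (R.map (fun n : ℤ => (n : ℝ))))
      ↔ (d₁ ∣ a ∧ d₂ ∣ c) := by
  obtain ⟨e, he⟩ := hD ▸ even_sq_sub_mul_add a b c
  have hD' : (0 : ℝ) < D := by exact_mod_cast hDpos
  have ha' : (a : ℝ) ≠ 0 := Int.cast_ne_zero.2 ha
  have hBG := quadRoots_mul_diag (b := (b : ℝ)) (c := (c : ℝ)) ha' (Real.sq_sqrt hD'.le)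
    (by exact_mod_cast hD)
  have hB := isUnit_det_quadRoots (b := (b : ℝ)) ha' (Real.sqrt_pos.2 hD').ne'
  have hN : !![((D : ℝ) + b) / 2, (a : ℝ); -c, (D - b) / 2]
      = (!![e, a; -c, e - b]).map (Int.castRingHom ℝ) := by
    have he' : (D : ℝ) + b = e + e := by exact_mod_cast he
    ext i j; fin_cases i <;> fin_cases j <;> 
      simp only [Fin.zero_eta, Fin.mk_one, Fin.isValue, of_apply, cons_val', cons_val_zero,
        cons_val_one, cons_val_fin_one, map_apply, Int.coe_castRingHom, Int.cast_neg,
        Int.cast_sub] <;>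
      linarith
  have hP : !![(d₁ : ℝ), 0; 0, (d₂ : ℝ)] = (diagonal ![d₁, d₂]).map (Int.castRingHom ℝ) := by
    rw [diagonal_fin_two]
    ext i j; fin_cases i <;> fin_cases j <;> simp
  simp_rw [intertwines_inv_mul_iff hB hBG, hN, hP]
  refine (exists_map_mul_eq_mul_map_iff Int.cast_injective _ _).trans ?_
  rw [exists_mul_diagonal_fin_two_iff _ hco]
  simp

/-- Lemma 4.4 (symplectically adapted bases): with `D = b² − 4ac > 0` not a
square, `λ = (−b+√D)/(2a)`, `λ' = (−b−√D)/(2a)`, `B = [[1,1],[λ,λ']]`,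
`P = diag(d₁,d₂)` and `Γ = diag((D+√D)/2, (D−√D)/2)`, there is an integer
matrix `R` with `Γ·(B⁻¹P) = (B⁻¹P)·R` if and only if `d₁ ∣ a` and `d₂ ∣ c`. -/
theorem statement12 (a b c : ℤ) (ha : a ≠ 0) (D : ℤ) (hD : D = b ^ 2 - 4 * a * c)
    (hDpos : 0 < D) (hns : ¬ IsSquare D) (d₁ d₂ : ℤ) (hd₁ : 0 < d₁) (hd₂ : 0 < d₂)
    (hco : IsCoprime d₁ d₂) :
    (∃ R : Matrix (Fin 2) (Fin 2) ℤ,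
        (!![((D : ℝ) + Real.sqrt (D : ℝ)) / 2, 0; 0, ((D : ℝ) - Real.sqrt (D : ℝ)) / 2]) *
          ((!![(1 : ℝ), 1;
              (-(b : ℝ) + Real.sqrt (D : ℝ)) / (2 * (a : ℝ)),
              (-(b : ℝ) - Real.sqrt (D : ℝ)) / (2 * (a : ℝ))])⁻¹ *
            !![(d₁ : ℝ), 0; 0, (d₂ : ℝ)])
        = ((!![(1 : ℝ), 1;
              (-(b : ℝ) + Real.sqrt (D : ℝ)) / (2 * (a : ℝ)),
              (-(b : ℝ) - Real.sqrt (D : ℝ)) / (2 * (a : ℝ))])⁻¹ *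
            !![(d₁ : ℝ), 0; 0, (d₂ : ℝ)]) *
          (R.map (fun n : ℤ => (n : ℝ))))
      ↔ (d₁ ∣ a ∧ d₂ ∣ c) :=
  statement12_general a b c ha D hD hDpos d₁ d₂ hco
end

section
/- Let U, V, L be integers with U ≠ 0 and gcd(U, V, L) = 1. Then there exists an integer n such that n·U and L − n·V are coprime. -/
/-- The arithmetic selection claim from the proof of Lemma 7.2: if
`gcd(U, V, L) = 1` and `U ≠ 0`, there is an integer `n` such that `n·U` and
`L − n·V` are coprime. -/
theorem statement13 (U V L : ℤ) (hU : U ≠ 0)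
    (h : Int.gcd (Int.gcd U V) L = 1) :
    ∃ n : ℤ, IsCoprime (n * U) (L - n * V) := by
  classical
  set S : Finset ℕ := U.natAbs.primeFactors.filter (fun p => ¬ p ∣ L.natAbs) with hS
  set N : ℕ := ∏ p ∈ S, p with hN
  refine ⟨(N : ℤ), ?_⟩
  rw [Int.isCoprime_iff_gcd_eq_one]
  by_contra hg
  obtain ⟨p, hp, h1, h2⟩ := Nat.Prime.not_coprime_iff_dvd.mp hg
  have h1' : (p : ℤ) ∣ (N : ℤ) * U := Int.natCast_dvd.mpr h1
  have h2' : (p : ℤ) ∣ L - (N : ℤ) * V := Int.natCast_dvd.mpr h2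
  have hpZ : Prime (p : ℤ) := Nat.prime_iff_prime_int.mp hp
  by_cases hpN : p ∣ N
  · -- then p ∈ S so p ∤ L, but p ∣ N ∣ N*V and p ∣ L - N*V give p ∣ L
    have hpS : p ∈ S := by
      obtain ⟨q, hq, hpq⟩ := (hp.prime.dvd_finset_prod_iff _).mp hpN
      have hq' : q.Prime := Nat.prime_of_mem_primeFactors (Finset.mem_filter.mp hq).1
      rwa [(Nat.prime_dvd_prime_iff_eq hp hq').mp hpq]
    have hnL : ¬ p ∣ L.natAbs := (Finset.mem_filter.mp hpS).2
    have hpL : (p : ℤ) ∣ L := by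
      have : (p : ℤ) ∣ (N : ℤ) * V := (Int.natCast_dvd_natCast.mpr hpN).mul_right V
      have := dvd_add h2' this
      simpa using this
    exact hnL (Int.natCast_dvd.mp hpL)
  · have hpU : (p : ℤ) ∣ U := by
      rcases hpZ.dvd_mul.mp h1' with hc | hc
      · exact absurd (Int.natCast_dvd.mp hc) hpN
      · exact hc
    have hpUn : p ∣ U.natAbs := Int.natCast_dvd.mp hpU
    have hpLn : p ∣ L.natAbs := by
      by_contra hc
      exact hpN (Finset.dvd_prod_of_mem _ (Finset.mem_filter.mpr
        ⟨Nat.mem_primeFactors.mpr ⟨hp, hpUn, Int.natAbs_ne_zero.mpr hU⟩, hc⟩))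
    have hpL : (p : ℤ) ∣ L := Int.natCast_dvd.mpr hpLn
    have hpNV : (p : ℤ) ∣ (N : ℤ) * V := by
      have := dvd_sub hpL h2'
      simpa using this
    have hpV : (p : ℤ) ∣ V := by
      rcases hpZ.dvd_mul.mp hpNV with hc | hc
      · exact absurd (Int.natCast_dvd.mp hc) hpN
      · exact hc
    have hpVn : p ∣ V.natAbs := Int.natCast_dvd.mp hpV
    have : p ∣ 1 := h ▸ Nat.dvd_gcd (Nat.dvd_gcd hpUn hpVn) hpLn
    exact hp.one_lt.ne' (Nat.dvd_one.mp this)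
end
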